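/- Let β > 0, and for a Hamiltonian H ≥ 0 with lowest eigenvalue 0 and second-lowest eigenvalue E₁ > 0, denote the thermal energy at scaled coupling J by E(β, J) = Tr(ω_β(JH) H). Then for β_c > β_h > 0 there is a constant K > 0, independent of J, such that (β_c E(β_c, J))/(β_h E(β_h, J)) ≤ K · Z_{β_h}(J) · e^{−JE₁(β_c − β_h)} for all J > 0, and in particular this ratio tends to 0 as J → ∞. -/

import Mathlib

/-!
Diagonalising `H`, every quantity in the statement is a finite sum over the spectrum `μ`:
`Z(t) = ∑ e^{-t μᵢ}` and `Tr(e^{-tH} H) = ∑ e^{-t μᵢ} μᵢ`, with `t = βJ`. Only eigenvalues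
`μᵢ ≥ E₁` contribute to the energy sum, so raising `t` by `Δ` shrinks it by at least `e^{-Δ E₁}`,
while the ground state gives `Z(t) ≥ 1`. Hence the ratio is at most `(β_c/β_h) Z_{β_h}(J)
e^{-J E₁ (β_c - β_h)}`, and since `Z_{β_h}(J) ≤ n` this tends to `0`.
-/


open Matrix
open scoped ComplexOrder

noncomputable section

/-- Functional calculus for a (Hermitian) matrix: apply `f` to the eigenvalues. -/
def matFun {n : ℕ} (f : ℝ → ℝ) (A : Matrix (Fin n) (Fin n) ℂ) : Matrix (Fin n) (Fin n) ℂ :=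
  if hA : A.IsHermitian then
    (hA.eigenvectorUnitary : Matrix (Fin n) (Fin n) ℂ) *
      Matrix.diagonal (fun i => (f (hA.eigenvalues i) : ℂ)) *
      star (hA.eigenvectorUnitary : Matrix (Fin n) (Fin n) ℂ)
  else 0

/-- Matrix logarithm of a Hermitian matrix (spectral calculus with `Real.log`). -/
def matLog {n : ℕ} (A : Matrix (Fin n) (Fin n) ℂ) : Matrix (Fin n) (Fin n) ℂ :=
  matFun Real.log A

/-- Von Neumann entropy `S(ρ) = -Tr(ρ log ρ)`. -/
def vnEntropy {n : ℕ} (ρ : Matrix (Fin n) (Fin n) ℂ) : ℝ :=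
  -(Matrix.trace (ρ * matLog ρ)).re

/-- Quantum relative entropy `D(ρ‖σ) = Tr(ρ log ρ) - Tr(ρ log σ)`. -/
def relEnt {n : ℕ} (ρ σ : Matrix (Fin n) (Fin n) ℂ) : ℝ :=
  (Matrix.trace (ρ * (matLog ρ - matLog σ))).re

/-- Gibbs state `ω_β(H) = e^{-βH}/Tr(e^{-βH})`. -/
def gibbs {n : ℕ} (β : ℝ) (H : Matrix (Fin n) (Fin n) ℂ) : Matrix (Fin n) (Fin n) ℂ :=
  (Matrix.trace (NormedSpace.exp ((-β : ℂ) • H)))⁻¹ • NormedSpace.exp ((-β : ℂ) • H)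

/-- A density matrix: positive semidefinite with unit trace. -/
def IsDensity {n : ℕ} (ρ : Matrix (Fin n) (Fin n) ℂ) : Prop :=
  ρ.PosSemidef ∧ Matrix.trace ρ = 1

open Filter Topology

section Spectrum

variable {ι : Type*} [Fintype ι]

def partitionFunction (μ : ι → ℝ) (t : ℝ) : ℝ :=
  ∑ i, Real.exp (-t * μ i)

def unnormalizedEnergy (μ : ι → ℝ) (t : ℝ) : ℝ :=
  ∑ i, Real.exp (-t * μ i) * μ i

def thermalEnergy (μ : ι → ℝ) (t : ℝ) : ℝ :=
  unnormalizedEnergy μ t / partitionFunction μ t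

lemma one_le_partitionFunction {μ : ι → ℝ} (hzero : ∃ i, μ i = 0) (t : ℝ) :
    1 ≤ partitionFunction μ t := by
  obtain ⟨i₀, hi₀⟩ := hzero
  calc (1 : ℝ) = Real.exp (-t * μ i₀) := by simp [hi₀]
    _ ≤ partitionFunction μ t :=
      Finset.single_le_sum (f := fun i => Real.exp (-t * μ i)) (fun i _ => (Real.exp_pos _).le)
        (Finset.mem_univ i₀)

lemma partitionFunction_le_card {μ : ι → ℝ} (hμ : ∀ i, 0 ≤ μ i) {t : ℝ} (ht : 0 ≤ t) :
    partitionFunction μ t ≤ Fintype.card ι := by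
  calc partitionFunction μ t ≤ ∑ _i : ι, (1 : ℝ) :=
        Finset.sum_le_sum fun i _ => Real.exp_le_one_iff.mpr <| by nlinarith [hμ i]
    _ = Fintype.card ι := by simp

lemma unnormalizedEnergy_nonneg {μ : ι → ℝ} (hμ : ∀ i, 0 ≤ μ i) (t : ℝ) :
    0 ≤ unnormalizedEnergy μ t :=
  Finset.sum_nonneg fun i _ => mul_nonneg (Real.exp_pos _).le (hμ i)

lemma thermalEnergy_nonneg {μ : ι → ℝ} (hμ : ∀ i, 0 ≤ μ i) (t : ℝ) : 0 ≤ thermalEnergy μ t :=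
  div_nonneg (unnormalizedEnergy_nonneg hμ t) (Finset.sum_nonneg fun _ _ => Real.exp_nonneg _)

lemma unnormalizedEnergy_le_exp_mul {μ : ι → ℝ} (hμ : ∀ i, 0 ≤ μ i) {E₁ : ℝ}
    (hgap : ∀ i, μ i = 0 ∨ E₁ ≤ μ i) {s t : ℝ} (hst : s ≤ t) :
    unnormalizedEnergy μ t ≤ Real.exp (-(t - s) * E₁) * unnormalizedEnergy μ s := by
  rw [unnormalizedEnergy, unnormalizedEnergy, Finset.mul_sum]
  refine Finset.sum_le_sum fun i _ => ?_
  rcases hgap i with hground | hexcited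
  · simp [hground]
  · rw [← mul_assoc, ← Real.exp_add]
    gcongr
    · exact hμ i
    · nlinarith

lemma thermalEnergy_ratio_le {μ : ι → ℝ} (hzero : ∃ i, μ i = 0) (hμ : ∀ i, 0 ≤ μ i) {E₁ : ℝ}
    (hgap : ∀ i, μ i = 0 ∨ E₁ ≤ μ i) {βc βh J : ℝ} (hβh : 0 ≤ βh) (hβ : βh ≤ βc) (hJ : 0 ≤ J) :
    βc * thermalEnergy μ (βc * J) / (βh * thermalEnergy μ (βh * J)) ≤
      βc / βh * partitionFunction μ (βh * J) * Real.exp (-J * E₁ * (βc - βh)) := by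
  have hdecay : unnormalizedEnergy μ (βc * J) / unnormalizedEnergy μ (βh * J) ≤
      Real.exp (-J * E₁ * (βc - βh)) := by
    refine div_le_of_le_mul₀ (unnormalizedEnergy_nonneg hμ _) (Real.exp_pos _).le ?_
    have := unnormalizedEnergy_le_exp_mul hμ hgap (mul_le_mul_of_nonneg_right hβ hJ)
    rwa [show -(βc * J - βh * J) * E₁ = -J * E₁ * (βc - βh) by ring] at this
  have hZc := one_le_partitionFunction hzero (βc * J)
  have hZh := one_le_partitionFunction hzero (βh * J)
  calc βc * thermalEnergy μ (βc * J) / (βh * thermalEnergy μ (βh * J))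
      = βc / βh * (unnormalizedEnergy μ (βc * J) / unnormalizedEnergy μ (βh * J)) *
          (partitionFunction μ (βh * J) / partitionFunction μ (βc * J)) := by
        simp only [thermalEnergy, div_eq_mul_inv, mul_inv, inv_inv]; ring
    _ ≤ βc / βh * Real.exp (-J * E₁ * (βc - βh)) * partitionFunction μ (βh * J) := by
      have : 0 ≤ βc / βh := div_nonneg (hβh.trans hβ) hβh
      have : 0 ≤ unnormalizedEnergy μ (βc * J) / unnormalizedEnergy μ (βh * J) :=
        div_nonneg (unnormalizedEnergy_nonneg hμ _) (unnormalizedEnergy_nonneg hμ _)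
      have : 0 ≤ partitionFunction μ (βh * J) / partitionFunction μ (βc * J) := by positivity
      gcongr
      exact div_le_self (by positivity) hZc
    _ = βc / βh * partitionFunction μ (βh * J) * Real.exp (-J * E₁ * (βc - βh)) := by ring

lemma tendsto_thermalEnergy_ratio_atTop {μ : ι → ℝ} (hzero : ∃ i, μ i = 0)
    (hμ : ∀ i, 0 ≤ μ i) {E₁ : ℝ} (hE₁ : 0 < E₁) (hgap : ∀ i, μ i = 0 ∨ E₁ ≤ μ i)
    {βc βh : ℝ} (hβh : 0 ≤ βh) (hβ : βh < βc) :
    Tendsto (fun J => βc * thermalEnergy μ (βc * J) / (βh * thermalEnergy μ (βh * J)))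
      atTop (𝓝 0) := by
  have hexp : Tendsto (fun J : ℝ => Real.exp (-J * E₁ * (βc - βh))) atTop (𝓝 0) :=
    (Real.tendsto_exp_neg_atTop_nhds_zero.comp
      (tendsto_id.atTop_mul_const (mul_pos hE₁ (sub_pos.2 hβ)))).congr fun J => by
        simp only [Function.comp_apply, id]; ring_nf
  have hbound : Tendsto (fun J : ℝ => βc / βh * Fintype.card ι * Real.exp (-J * E₁ * (βc - βh)))
      atTop (𝓝 0) := by
    simpa using hexp.const_mul (βc / βh * Fintype.card ι)
  refine squeeze_zero' ?_ ?_ hbound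
  · exact .of_forall fun J => div_nonneg
      (mul_nonneg (hβh.trans hβ.le) (thermalEnergy_nonneg hμ _))
      (mul_nonneg hβh (thermalEnergy_nonneg hμ _))
  · filter_upwards [eventually_ge_atTop 0] with J hJ
    refine (thermalEnergy_ratio_le hzero hμ hgap hβh hβ.le hJ).trans ?_
    have : 0 ≤ βc / βh := div_nonneg (hβh.trans hβ.le) hβh
    gcongr
    exact partitionFunction_le_card hμ (mul_nonneg hβh hJ)

end Spectrum

namespace Matrix.IsHermitian

variable {m : Type*} [Fintype m] [DecidableEq m] {A : Matrix m m ℂ} (hA : A.IsHermitian)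

lemma cfc_id : hA.cfc id = A :=
  hA.spectral_theorem.symm

lemma cfc_mul_cfc (f g : ℝ → ℝ) : hA.cfc f * hA.cfc g = hA.cfc (f * g) := by
  simp only [IsHermitian.cfc, ← map_mul, diagonal_mul_diagonal]
  congr 2
  ext i
  simp

lemma cfc_mul_self (f : ℝ → ℝ) : hA.cfc f * A = hA.cfc (f * id) := by
  rw [← hA.cfc_mul_cfc, hA.cfc_id]

lemma trace_cfc (f : ℝ → ℝ) : (hA.cfc f).trace = ((∑ i, f (hA.eigenvalues i) : ℝ) : ℂ) := by
  rw [IsHermitian.cfc, Unitary.conjStarAlgAut_apply, trace_mul_cycle, Unitary.coe_star_mul_self,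
    one_mul, trace_diagonal]
  push_cast
  rfl

lemma exp_ofReal_smul (c : ℝ) :
    NormedSpace.exp ((c : ℂ) • A) = hA.cfc (fun x => Real.exp (c * x)) := by
  have hconj := exp_units_conj (Unitary.toUnits hA.eigenvectorUnitary)
  simp only [Unitary.val_toUnits_apply, Unitary.val_inv_toUnits_apply, ← Unitary.star_eq_inv,
    Unitary.coe_star] at hconj
  conv_lhs => rw [← hA.cfc_id]
  rw [IsHermitian.cfc, ← map_smul, Unitary.conjStarAlgAut_apply, ← diagonal_smul, hconj,
    exp_diagonal, IsHermitian.cfc, Unitary.conjStarAlgAut_apply]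
  congr 3
  funext i
  simp [Pi.coe_exp, ← Complex.exp_eq_exp_ℂ]

lemma trace_exp_neg_smul (t : ℝ) :
    (NormedSpace.exp (-(t : ℂ) • A)).trace = partitionFunction hA.eigenvalues t := by
  rw [← Complex.ofReal_neg, hA.exp_ofReal_smul, hA.trace_cfc]
  rfl

lemma trace_gibbs_mul_self {n : ℕ} {H : Matrix (Fin n) (Fin n) ℂ} (hH : H.IsHermitian) (β t : ℝ) :
    (gibbs β ((t : ℂ) • H) * H).trace = thermalEnergy hH.eigenvalues (β * t) := by
  have hscale : (-β : ℂ) • ((t : ℂ) • H) = -((β * t : ℝ) : ℂ) • H := by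
    rw [smul_smul]; push_cast; ring_nf
  rw [gibbs, hscale, smul_mul, trace_smul, hH.trace_exp_neg_smul, ← Complex.ofReal_neg,
    hH.exp_ofReal_smul, hH.cfc_mul_self, hH.trace_cfc, thermalEnergy, smul_eq_mul,
    Complex.ofReal_div, div_eq_inv_mul]
  rfl

end Matrix.IsHermitian

theorem thermal_energy_ratio_bound_general {n : ℕ} (H : Matrix (Fin n) (Fin n) ℂ)
    (hH : H.PosSemidef) (hzero : ∃ i, hH.1.eigenvalues i = 0)
    (E₁ : ℝ) (hE₁ : 0 < E₁)
    (hgap : ∀ i, hH.1.eigenvalues i = 0 ∨ E₁ ≤ hH.1.eigenvalues i)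
    (βc βh : ℝ) (hβh : 0 < βh) (hβ : βh < βc) :
    (∃ K : ℝ, 0 < K ∧ ∀ J : ℝ, 0 < J →
        βc * (Matrix.trace (gibbs βc ((J : ℂ) • H) * H)).re /
            (βh * (Matrix.trace (gibbs βh ((J : ℂ) • H) * H)).re) ≤
          K * (Matrix.trace (NormedSpace.exp ((-(βh * J) : ℂ) • H))).re *
            Real.exp (-J * E₁ * (βc - βh))) ∧
    Tendsto (fun J : ℝ =>
        βc * (Matrix.trace (gibbs βc ((J : ℂ) • H) * H)).re /
          (βh * (Matrix.trace (gibbs βh ((J : ℂ) • H) * H)).re))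
      atTop (𝓝 0) := by
  have hμ : ∀ i, 0 ≤ hH.1.eigenvalues i := hH.eigenvalues_nonneg
  have hE : ∀ β J : ℝ, (Matrix.trace (gibbs β ((J : ℂ) • H) * H)).re =
      thermalEnergy hH.1.eigenvalues (β * J) := fun β J => by
    rw [hH.1.trace_gibbs_mul_self, Complex.ofReal_re]
  have hZ : ∀ J : ℝ, (Matrix.trace (NormedSpace.exp ((-(βh * J) : ℂ) • H))).re =
      partitionFunction hH.1.eigenvalues (βh * J) := fun J => by
    rw [← Complex.ofReal_mul, hH.1.trace_exp_neg_smul, Complex.ofReal_re]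
  simp only [hE, hZ]
  exact ⟨⟨βc / βh, div_pos (hβh.trans hβ) hβh, fun J hJ =>
      thermalEnergy_ratio_le hzero hμ hgap hβh.le hβ.le hJ.le⟩,
    tendsto_thermalEnergy_ratio_atTop hzero hμ hE₁ hgap hβh.le hβ⟩

/-- with `E(β, J) = Tr(ω_β(JH) H)` the thermal energy, lowest eigenvalue `0` and
spectral gap `E₁ > 0`, for `β_c > β_h > 0` there is `K > 0` independent of `J` with
`(β_c E(β_c,J))/(β_h E(β_h,J)) ≤ K Z_{β_h}(J) e^{−J E₁ (β_c − β_h)}` for all `J > 0`, and the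
ratio tends to `0` as `J → ∞`. -/
theorem thermal_energy_ratio_bound {n : ℕ} (H : Matrix (Fin n) (Fin n) ℂ)
    (hH : H.PosSemidef) (hzero : ∃ i, hH.1.eigenvalues i = 0)
    (E₁ : ℝ) (hE₁ : 0 < E₁) (hE₁eig : ∃ i, hH.1.eigenvalues i = E₁)
    (hgap : ∀ i, hH.1.eigenvalues i = 0 ∨ E₁ ≤ hH.1.eigenvalues i)
    (βc βh : ℝ) (hβh : 0 < βh) (hβ : βh < βc) :
    (∃ K : ℝ, 0 < K ∧ ∀ J : ℝ, 0 < J →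
        βc * (Matrix.trace (gibbs βc ((J : ℂ) • H) * H)).re /
            (βh * (Matrix.trace (gibbs βh ((J : ℂ) • H) * H)).re) ≤
          K * (Matrix.trace (NormedSpace.exp ((-(βh * J) : ℂ) • H))).re *
            Real.exp (-J * E₁ * (βc - βh))) ∧
    Tendsto (fun J : ℝ =>
        βc * (Matrix.trace (gibbs βc ((J : ℂ) • H) * H)).re /
          (βh * (Matrix.trace (gibbs βh ((J : ℂ) • H) * H)).re))
      atTop (𝓝 0) :=
  thermal_energy_ratio_bound_general H hH hzero E₁ hE₁ hgap βc βh hβh hβ
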